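/- Substitutions can be upgraded: if Γ ⊢ σ : Δ is a strict well-formed substitution, then σ is also a well-formed substitution from the full upgrade ↑Γ to the full upgrade ↑Δ, i.e. ↑Γ ⊢ σ : ↑Δ. -/
import Mathlib


set_option autoImplicit true

namespace Ert

/-- Syntax of λ_ert: types, propositions, terms and proofs, folded into a single
inductive (as in the paper's formalization), using de Bruijn indices. -/
inductive Tm : Type
  -- types
  | unit | nat
  | pi (A B : Tm)        -- (x : A) → B, B binds one variable
  | sigma (A B : Tm)     -- (x : A) × B
  | coprod (A B : Tm)    -- A + B
  | set (A φ : Tm)       -- {x : A | φ}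
  | pre (φ A : Tm)       -- (u : φ) ⇒ A, precondition type
  | inter (A B : Tm)     -- ∀ x : A, B, intersection type
  | union (A B : Tm)     -- ∃ x : A, B, union type
  -- propositions
  | top | bot
  | dimp (φ ψ : Tm)      -- (u : φ) ⇒ ψ
  | dand (φ ψ : Tm)      -- (u : φ) ∧ ψ
  | or (φ ψ : Tm)        -- φ ∨ ψ
  | all (A φ : Tm)       -- ∀ x : A, φ
  | ex (A φ : Tm)        -- ∃ x : A, φ
  | eq (A a b : Tm)      -- a =_A b
  -- terms
  | var (n : ℕ) | nil
  | lam (A e : Tm) | app (f a : Tm)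
  | pair (a b : Tm) | letPair (C e e' : Tm)   -- let (x,y) : [z ↦ C] = e in e'
  | inl (a : Tm) | inr (a : Tm)
  | cases (C e l r : Tm)                       -- cases [x ↦ C] e (inl y ↦ l) (inr z ↦ r)
  | lamPr (φ e : Tm) | appPr (f p : Tm)        -- λ u : φ, e ; f p
  | elem (a p : Tm) | letSet (C e e' : Tm)     -- {a, p} ; let {x,u} = e in e'
  | lamIr (A e : Tm) | appIr (f a : Tm)        -- λ ‖x:A‖, e ; f ‖a‖
  | repr (a b : Tm) | letRepr (C e e' : Tm)    -- (‖a‖, b) ; let (‖x‖,y) = e in e'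
  | zero | succ
  | natrec (C e z s : Tm)                      -- natrec [n ↦ C] e z (‖succ n‖, y ↦ s)
  | abort (p : Tm)                             -- absurd p (into a type)
  -- proofs
  | triv                                       -- ⟨⟩ : ⊤
  | pabort (p : Tm)                            -- absurd p (into a proposition)
  | plam (φ p : Tm) | pmp (p q : Tm)           -- λ̂ u : φ, p ; modus ponens
  | pconj (p q : Tm) | pletConj (θ p q : Tm)
  | porl (p : Tm) | porr (p : Tm) | pcasesOr (θ p l r : Tm)
  | pgen (A p : Tm) | pspec (p a : Tm)         -- λ̂ ‖x:A‖, p ; p ‖a‖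
  | pwit (a p : Tm) | pletWit (ψ p q : Tm)     -- ⟨‖a‖, p⟩ ; let ⟨‖x‖,u⟩ = p in q
  | pletPair (φ e q : Tm) | pletSet (φ e q : Tm) | pletRepr (φ e q : Tm)
  | psubst (φ a b p q : Tm)                    -- subst [x ↦ φ][a][b] p q
  | pcases (φ e l r : Tm) | pind (φ e z s : Tm)
  -- axioms
  | prfl (a : Tm) | puniq (a : Tm) | pdiscr (a b p : Tm)
  | pbetaPr (e p : Tm) | pbetaTy (e a : Tm) | pbetaIr (e a : Tm)
  | pbetaLeft (C l r a : Tm) | pbetaRight (C l r b : Tm)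
  | pbetaZero (C z s : Tm) | pbetaSucc (C e z s : Tm)
  | pbetaPair (a b e : Tm) | pbetaSet (a p e : Tm) | pbetaRepr (a b e : Tm)
  | petaTy (f : Tm)
  | pirPr (e p q : Tm) | pirTy (e a b : Tm)
  | petaIr (f g i p : Tm) | petaPr (f g i p : Tm)

namespace Tm

/-- Generic traversal acting on variables, tracking the number `d` of binders crossed. -/
def tmap (v : ℕ → ℕ → Tm) : ℕ → Tm → Tm
  | _, .unit => .unit
  | _, .nat => .nat
  | d, .pi A B => .pi (tmap v d A) (tmap v (d+1) B)
  | d, .sigma A B => .sigma (tmap v d A) (tmap v (d+1) B)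
  | d, .coprod A B => .coprod (tmap v d A) (tmap v d B)
  | d, .set A φ => .set (tmap v d A) (tmap v (d+1) φ)
  | d, .pre φ A => .pre (tmap v d φ) (tmap v (d+1) A)
  | d, .inter A B => .inter (tmap v d A) (tmap v (d+1) B)
  | d, .union A B => .union (tmap v d A) (tmap v (d+1) B)
  | _, .top => .top
  | _, .bot => .bot
  | d, .dimp φ ψ => .dimp (tmap v d φ) (tmap v (d+1) ψ)
  | d, .dand φ ψ => .dand (tmap v d φ) (tmap v (d+1) ψ)
  | d, .or φ ψ => .or (tmap v d φ) (tmap v d ψ)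
  | d, .all A φ => .all (tmap v d A) (tmap v (d+1) φ)
  | d, .ex A φ => .ex (tmap v d A) (tmap v (d+1) φ)
  | d, .eq A a b => .eq (tmap v d A) (tmap v d a) (tmap v d b)
  | d, .var n => v d n
  | _, .nil => .nil
  | d, .lam A e => .lam (tmap v d A) (tmap v (d+1) e)
  | d, .app f a => .app (tmap v d f) (tmap v d a)
  | d, .pair a b => .pair (tmap v d a) (tmap v d b)
  | d, .letPair C e e' => .letPair (tmap v (d+1) C) (tmap v d e) (tmap v (d+2) e')
  | d, .inl a => .inl (tmap v d a)
  | d, .inr a => .inr (tmap v d a)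
  | d, .cases C e l r => .cases (tmap v (d+1) C) (tmap v d e) (tmap v (d+1) l) (tmap v (d+1) r)
  | d, .lamPr φ e => .lamPr (tmap v d φ) (tmap v (d+1) e)
  | d, .appPr f p => .appPr (tmap v d f) (tmap v d p)
  | d, .elem a p => .elem (tmap v d a) (tmap v d p)
  | d, .letSet C e e' => .letSet (tmap v (d+1) C) (tmap v d e) (tmap v (d+2) e')
  | d, .lamIr A e => .lamIr (tmap v d A) (tmap v (d+1) e)
  | d, .appIr f a => .appIr (tmap v d f) (tmap v d a)
  | d, .repr a b => .repr (tmap v d a) (tmap v d b)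
  | d, .letRepr C e e' => .letRepr (tmap v (d+1) C) (tmap v d e) (tmap v (d+2) e')
  | _, .zero => .zero
  | _, .succ => .succ
  | d, .natrec C e z s => .natrec (tmap v (d+1) C) (tmap v d e) (tmap v d z) (tmap v (d+2) s)
  | d, .abort p => .abort (tmap v d p)
  | _, .triv => .triv
  | d, .pabort p => .pabort (tmap v d p)
  | d, .plam φ p => .plam (tmap v d φ) (tmap v (d+1) p)
  | d, .pmp p q => .pmp (tmap v d p) (tmap v d q)
  | d, .pconj p q => .pconj (tmap v d p) (tmap v d q)
  | d, .pletConj θ p q => .pletConj (tmap v (d+1) θ) (tmap v d p) (tmap v (d+2) q)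
  | d, .porl p => .porl (tmap v d p)
  | d, .porr p => .porr (tmap v d p)
  | d, .pcasesOr θ p l r =>
      .pcasesOr (tmap v (d+1) θ) (tmap v d p) (tmap v (d+1) l) (tmap v (d+1) r)
  | d, .pgen A p => .pgen (tmap v d A) (tmap v (d+1) p)
  | d, .pspec p a => .pspec (tmap v d p) (tmap v d a)
  | d, .pwit a p => .pwit (tmap v d a) (tmap v d p)
  | d, .pletWit ψ p q => .pletWit (tmap v (d+1) ψ) (tmap v d p) (tmap v (d+2) q)
  | d, .pletPair φ e q => .pletPair (tmap v (d+1) φ) (tmap v d e) (tmap v (d+2) q)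
  | d, .pletSet φ e q => .pletSet (tmap v (d+1) φ) (tmap v d e) (tmap v (d+2) q)
  | d, .pletRepr φ e q => .pletRepr (tmap v (d+1) φ) (tmap v d e) (tmap v (d+2) q)
  | d, .psubst φ a b p q =>
      .psubst (tmap v (d+1) φ) (tmap v d a) (tmap v d b) (tmap v d p) (tmap v d q)
  | d, .pcases φ e l r => .pcases (tmap v (d+1) φ) (tmap v d e) (tmap v (d+1) l) (tmap v (d+1) r)
  | d, .pind φ e z s => .pind (tmap v (d+1) φ) (tmap v d e) (tmap v d z) (tmap v (d+2) s)
  | d, .prfl a => .prfl (tmap v d a)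
  | d, .puniq a => .puniq (tmap v d a)
  | d, .pdiscr a b p => .pdiscr (tmap v d a) (tmap v d b) (tmap v d p)
  | d, .pbetaPr e p => .pbetaPr (tmap v (d+1) e) (tmap v d p)
  | d, .pbetaTy e a => .pbetaTy (tmap v (d+1) e) (tmap v d a)
  | d, .pbetaIr e a => .pbetaIr (tmap v (d+1) e) (tmap v d a)
  | d, .pbetaLeft C l r a =>
      .pbetaLeft (tmap v (d+1) C) (tmap v (d+1) l) (tmap v (d+1) r) (tmap v d a)
  | d, .pbetaRight C l r b =>
      .pbetaRight (tmap v (d+1) C) (tmap v (d+1) l) (tmap v (d+1) r) (tmap v d b)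
  | d, .pbetaZero C z s => .pbetaZero (tmap v (d+1) C) (tmap v d z) (tmap v (d+2) s)
  | d, .pbetaSucc C e z s => .pbetaSucc (tmap v (d+1) C) (tmap v d e) (tmap v d z) (tmap v (d+2) s)
  | d, .pbetaPair a b e => .pbetaPair (tmap v d a) (tmap v d b) (tmap v (d+2) e)
  | d, .pbetaSet a p e => .pbetaSet (tmap v d a) (tmap v d p) (tmap v (d+2) e)
  | d, .pbetaRepr a b e => .pbetaRepr (tmap v d a) (tmap v d b) (tmap v (d+2) e)
  | d, .petaTy f => .petaTy (tmap v d f)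
  | d, .pirPr e p q => .pirPr (tmap v (d+1) e) (tmap v d p) (tmap v d q)
  | d, .pirTy e a b => .pirTy (tmap v d e) (tmap v d a) (tmap v d b)
  | d, .petaIr f g i p => .petaIr (tmap v d f) (tmap v d g) (tmap v d i) (tmap v (d+1) p)
  | d, .petaPr f g i p => .petaPr (tmap v d f) (tmap v d g) (tmap v d i) (tmap v (d+1) p)

/-- Renaming of de Bruijn variables. -/
def rename (t : Tm) (ρ : ℕ → ℕ) : Tm :=
  t.tmap (fun d n => if n < d then .var n else .var (ρ (n - d) + d)) 0

/-- Weakening: shift all free variables up by one. -/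
def wk0 (t : Tm) : Tm := t.rename Nat.succ

/-- Capture-avoiding substitution `[σ]t` for a substitution `σ : Var → Tm`. -/
def subst (t : Tm) (σ : ℕ → Tm) : Tm :=
  t.tmap (fun d n => if n < d then .var n else (σ (n - d)).rename (· + d)) 0

/-- Substitute `v` for variable 0, mapping the remaining variables `n+1 ↦ n+k`
(used to state rules such as `[(x, y)/z]C` with `k = 2`). -/
def substK (t v : Tm) (k : ℕ) : Tm :=
  t.subst fun n => match n with | 0 => v | n+1 => .var (n+k)

/-- Substitution `[v/x]t` of `v` for the most recently bound variable. -/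
def subst0 (t v : Tm) : Tm := t.substK v 0

/-- Simultaneous substitution `[v1/x][v0/y]t` for the two most recently bound variables. -/
def subst2 (t v1 v0 : Tm) : Tm :=
  t.subst fun n => match n with | 0 => v0 | 1 => v1 | n+2 => .var n

end Tm

/-- Hypothesis kinds: computational (`x : A`) or ghost (`‖x : A‖`). -/
inductive HypKind : Type
  | comp | ghost

/-- Context hypotheses: a typed (computational or ghost) variable, or a
propositional hypothesis `u : φ`. -/
inductive Hyp : Type
  | tm (k : HypKind) (A : Tm)
  | pf (φ : Tm)

/-- A context is a list of hypotheses, most recent first. -/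
abbrev Ctx := List Hyp

def Hyp.wk : Hyp → Hyp
  | .tm k A => .tm k A.wk0
  | .pf φ => .pf φ.wk0

/-- `HasVar Γ n H`: de Bruijn variable `n` is declared in `Γ` with hypothesis `H`
(whose payload is already weakened to live in `Γ`). -/
inductive HasVar : Ctx → ℕ → Hyp → Prop
  | head {Γ : Ctx} {H : Hyp} : HasVar (H :: Γ) 0 H.wk
  | tail {Γ : Ctx} {H H' : Hyp} {n : ℕ} : HasVar Γ n H → HasVar (H' :: Γ) (n+1) H.wk

/-- The full upgrade `↑Γ` of a context: every ghost hypothesis becomes computational. -/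
def upg : Ctx → Ctx
  | [] => []
  | .tm _ A :: Γ => .tm .comp A :: upg Γ
  | .pf φ :: Γ => .pf φ :: upg Γ

/-- Typing annotations: the four judgments `Γ ⊢ A ty`, `Γ ⊢ φ pr`,
`Γ ⊢ a : A`, and `Γ ⊢ p : φ` are folded into one inductive `Judg`. -/
inductive Annot : Type
  | ty
  | pr
  | tm (A : Tm)
  | pf (φ : Tm)

/-- The typing judgments of λ_ert. -/
inductive Judg : Ctx → Tm → Annot → Prop
  -- Type well-formedness (figure: λ_ert Type Well-formedness)
  | unit_wf : Judg Γ .unit .ty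
  | nat_wf : Judg Γ .nat .ty
  | pi_wf : Judg Γ A .ty → Judg (.tm .comp A :: Γ) B .ty → Judg Γ (.pi A B) .ty
  | sigma_wf : Judg Γ A .ty → Judg (.tm .comp A :: Γ) B .ty → Judg Γ (.sigma A B) .ty
  | coprod_wf : Judg Γ A .ty → Judg Γ B .ty → Judg Γ (.coprod A B) .ty
  | set_wf : Judg Γ A .ty → Judg (.tm .comp A :: Γ) φ .pr → Judg Γ (.set A φ) .ty
  | pre_wf : Judg Γ φ .pr → Judg (.pf φ :: Γ) A .ty → Judg Γ (.pre φ A) .ty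
  | inter_wf : Judg Γ A .ty → Judg (.tm .comp A :: Γ) B .ty → Judg Γ (.inter A B) .ty
  | union_wf : Judg Γ A .ty → Judg (.tm .comp A :: Γ) B .ty → Judg Γ (.union A B) .ty
  -- Proposition well-formedness (figure: λ_ert Proposition Well-formedness)
  | top_wf : Judg Γ .top .pr
  | bot_wf : Judg Γ .bot .pr
  | dimp_wf : Judg Γ φ .pr → Judg (.pf φ :: Γ) ψ .pr → Judg Γ (.dimp φ ψ) .pr
  | dand_wf : Judg Γ φ .pr → Judg (.pf φ :: Γ) ψ .pr → Judg Γ (.dand φ ψ) .pr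
  | or_wf : Judg Γ φ .pr → Judg Γ ψ .pr → Judg Γ (.or φ ψ) .pr
  | all_wf : Judg Γ A .ty → Judg (.tm .comp A :: Γ) φ .pr → Judg Γ (.all A φ) .pr
  | ex_wf : Judg Γ A .ty → Judg (.tm .comp A :: Γ) φ .pr → Judg Γ (.ex A φ) .pr
  | eq_wf : Judg Γ A .ty → Judg (upg Γ) a (.tm A) → Judg (upg Γ) b (.tm A) →
      Judg Γ (.eq A a b) .pr
  -- Term typing (figure: λ_ert Term Typing)
  | var : HasVar Γ n (.tm .comp A) → Judg Γ (.var n) (.tm A)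
  | nil_intro : Judg Γ .nil (.tm .unit)
  | zero : Judg Γ .zero (.tm .nat)
  | succ : Judg Γ .succ (.tm (.pi .nat .nat))
  | abort : Judg Γ p (.pf .bot) → Judg Γ (.abort p) (.tm A)
  | lam : Judg (.tm .comp A :: Γ) e (.tm B) → Judg Γ (.lam A e) (.tm (.pi A B))
  | app : Judg Γ f (.tm (.pi A B)) → Judg Γ a (.tm A) →
      Judg Γ (.app f a) (.tm (B.subst0 a))
  | pair : Judg Γ l (.tm A) → Judg Γ r (.tm (B.subst0 l)) →
      Judg Γ (.pair l r) (.tm (.sigma A B))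
  | letPair : Judg Γ e (.tm (.sigma A B)) →
      Judg (.tm .comp (.sigma A B) :: Γ) C .ty →
      Judg (.tm .comp B :: .tm .comp A :: Γ) e'
        (.tm (C.substK (.pair (.var 1) (.var 0)) 2)) →
      Judg Γ (.letPair C e e') (.tm (C.subst0 e))
  | inl : Judg Γ e (.tm A) → Judg Γ (.inl e) (.tm (.coprod A B))
  | inr : Judg Γ e (.tm B) → Judg Γ (.inr e) (.tm (.coprod A B))
  | cases : Judg (.tm .comp (.coprod A B) :: Γ) C .ty →
      Judg Γ e (.tm (.coprod A B)) →
      Judg (.tm .comp A :: Γ) l (.tm (C.substK (.inl (.var 0)) 1)) →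
      Judg (.tm .comp B :: Γ) r (.tm (C.substK (.inr (.var 0)) 1)) →
      Judg Γ (.cases C e l r) (.tm (C.subst0 e))
  | lamPr : Judg (.pf φ :: Γ) e (.tm A) → Judg Γ (.lamPr φ e) (.tm (.pre φ A))
  | appPr : Judg Γ f (.tm (.pre φ A)) → Judg Γ p (.pf φ) →
      Judg Γ (.appPr f p) (.tm (A.subst0 p))
  | elem : Judg Γ a (.tm A) → Judg Γ p (.pf (φ.subst0 a)) →
      Judg Γ (.elem a p) (.tm (.set A φ))
  | letSet : Judg Γ e (.tm (.set A φ)) →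
      Judg (.tm .comp (.set A φ) :: Γ) C .ty →
      Judg (.pf φ :: .tm .comp A :: Γ) e'
        (.tm (C.substK (.elem (.var 1) (.var 0)) 2)) →
      Judg Γ (.letSet C e e') (.tm (C.subst0 e))
  | lamIr : Judg (.tm .ghost A :: Γ) e (.tm B) → Judg Γ (.lamIr A e) (.tm (.inter A B))
  | appIr : Judg Γ f (.tm (.inter A B)) → Judg (upg Γ) a (.tm A) →
      Judg Γ (.appIr f a) (.tm (B.subst0 a))
  | repr : Judg (upg Γ) a (.tm A) → Judg Γ b (.tm (B.subst0 a)) →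
      Judg Γ (.repr a b) (.tm (.union A B))
  | letRepr : Judg Γ e (.tm (.union A B)) →
      Judg (.tm .comp (.union A B) :: Γ) C .ty →
      Judg (.tm .comp B :: .tm .ghost A :: Γ) e'
        (.tm (C.substK (.repr (.var 1) (.var 0)) 2)) →
      Judg Γ (.letRepr C e e') (.tm (C.subst0 e))
  | natrec : Judg (.tm .comp .nat :: Γ) C .ty →
      Judg Γ e (.tm .nat) →
      Judg Γ z (.tm (C.subst0 .zero)) →
      Judg (.tm .comp C :: .tm .ghost .nat :: Γ) s
        (.tm (C.substK (.app .succ (.var 1)) 2)) →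
      Judg Γ (.natrec C e z s) (.tm (C.subst0 e))
  -- Proof typing (figure: λ_ert Proof Typing)
  | pvar : HasVar Γ n (.pf φ) → Judg Γ (.var n) (.pf φ)
  | triv : Judg Γ .triv (.pf .top)
  | pabort : Judg Γ p (.pf .bot) → Judg Γ (.pabort p) (.pf φ)
  | plam : Judg (.pf φ :: Γ) p (.pf ψ) → Judg Γ (.plam φ p) (.pf (.dimp φ ψ))
  | pmp : Judg Γ p (.pf (.dimp φ ψ)) → Judg Γ q (.pf φ) →
      Judg Γ (.pmp p q) (.pf (ψ.subst0 q))
  | pconj : Judg Γ p (.pf φ) → Judg Γ q (.pf (ψ.subst0 p)) →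
      Judg Γ (.pconj p q) (.pf (.dand φ ψ))
  | pletConj : Judg Γ p (.pf (.dand φ ψ)) →
      Judg (.pf (.dand φ ψ) :: Γ) θ .pr →
      Judg (.pf ψ :: .pf φ :: Γ) q (.pf (θ.substK (.pconj (.var 1) (.var 0)) 2)) →
      Judg Γ (.pletConj θ p q) (.pf (θ.subst0 p))
  | porl : Judg Γ p (.pf φ) → Judg Γ (.porl p) (.pf (.or φ ψ))
  | porr : Judg Γ p (.pf ψ) → Judg Γ (.porr p) (.pf (.or φ ψ))
  | pcasesOr : Judg (.pf (.or φ ψ) :: Γ) θ .pr →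
      Judg Γ p (.pf (.or φ ψ)) →
      Judg (.pf φ :: Γ) l (.pf (θ.substK (.porl (.var 0)) 1)) →
      Judg (.pf ψ :: Γ) r (.pf (θ.substK (.porr (.var 0)) 1)) →
      Judg Γ (.pcasesOr θ p l r) (.pf (θ.subst0 p))
  | pgen : Judg (.tm .ghost A :: Γ) p (.pf φ) → Judg Γ (.pgen A p) (.pf (.all A φ))
  | pspec : Judg Γ p (.pf (.all A φ)) → Judg (upg Γ) a (.tm A) →
      Judg Γ (.pspec p a) (.pf (φ.subst0 a))
  | pwit : Judg (upg Γ) a (.tm A) → Judg Γ p (.pf (φ.subst0 a)) →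
      Judg Γ (.pwit a p) (.pf (.ex A φ))
  | pletWit : Judg Γ p (.pf (.ex A φ)) →
      Judg (.pf (.ex A φ) :: Γ) ψ .pr →
      Judg (.pf φ :: .tm .comp A :: Γ) q (.pf (ψ.substK (.pwit (.var 1) (.var 0)) 2)) →
      Judg Γ (.pletWit ψ p q) (.pf (ψ.subst0 p))
  | pletPair : Judg (upg Γ) e (.tm (.sigma A B)) →
      Judg (.tm .comp (.sigma A B) :: Γ) φ .pr →
      Judg (.tm .comp B :: .tm .comp A :: Γ) q
        (.pf (φ.substK (.pair (.var 1) (.var 0)) 2)) →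
      Judg Γ (.pletPair φ e q) (.pf (φ.subst0 e))
  | pletSet : Judg (upg Γ) e (.tm (.set A φ)) →
      Judg (.tm .comp (.set A φ) :: Γ) ψ .pr →
      Judg (.pf φ :: .tm .comp A :: Γ) q
        (.pf (ψ.substK (.elem (.var 1) (.var 0)) 2)) →
      Judg Γ (.pletSet ψ e q) (.pf (ψ.subst0 e))
  | pletRepr : Judg (upg Γ) e (.tm (.union A B)) →
      Judg (.tm .comp (.union A B) :: Γ) ψ .pr →
      Judg (.tm .comp B :: .tm .comp A :: Γ) q
        (.pf (ψ.substK (.repr (.var 1) (.var 0)) 2)) →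
      Judg Γ (.pletRepr ψ e q) (.pf (ψ.subst0 e))
  | psubst : Judg (upg Γ) a (.tm A) → Judg (upg Γ) b (.tm A) →
      Judg Γ p (.pf (.eq A a b)) → Judg Γ q (.pf (φ.subst0 a)) →
      Judg Γ (.psubst φ a b p q) (.pf (φ.subst0 b))
  | pcases : Judg (.tm .comp (.coprod A B) :: Γ) φ .pr →
      Judg Γ e (.tm (.coprod A B)) →
      Judg (.tm .comp A :: Γ) l (.pf (φ.substK (.inl (.var 0)) 1)) →
      Judg (.tm .comp B :: Γ) r (.pf (φ.substK (.inr (.var 0)) 1)) →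
      Judg Γ (.pcases φ e l r) (.pf (φ.subst0 e))
  | pind : Judg (.tm .comp .nat :: Γ) φ .pr →
      Judg (upg Γ) e (.tm .nat) →
      Judg Γ z (.pf (φ.subst0 .zero)) →
      Judg (.pf φ :: .tm .comp .nat :: Γ) s (.pf (φ.substK (.app .succ (.var 1)) 2)) →
      Judg Γ (.pind φ e z s) (.pf (φ.subst0 e))
  -- Axioms (figure: λ_ert Axiom Typing)
  | prfl : Judg (upg Γ) a (.tm A) → Judg Γ (.prfl a) (.pf (.eq A a a))
  | puniq : Judg (upg Γ) a (.tm .unit) → Judg Γ (.puniq a) (.pf (.eq .unit a .nil))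
  | pdiscr : Judg (upg Γ) a (.tm A) → Judg (upg Γ) b (.tm B) →
      Judg Γ p (.pf (.eq (.coprod A B) (.inl a) (.inr b))) →
      Judg Γ (.pdiscr a b p) (.pf .bot)
  | pbetaPr : Judg (.pf φ :: upg Γ) e (.tm A) → Judg Γ p (.pf φ) →
      Judg Γ (.pbetaPr e p)
        (.pf (.eq (A.subst0 p) (.appPr (.lamPr φ e) p) (e.subst0 p)))
  | pbetaTy : Judg (.tm .comp A :: upg Γ) e (.tm B) → Judg (upg Γ) a (.tm A) →
      Judg Γ (.pbetaTy e a)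
        (.pf (.eq (B.subst0 a) (.app (.lam A e) a) (e.subst0 a)))
  | pbetaIr : Judg (.tm .comp A :: upg Γ) e (.tm B) → Judg (upg Γ) a (.tm A) →
      Judg Γ (.pbetaIr e a)
        (.pf (.eq (B.subst0 a) (.appIr (.lamIr A e) a) (e.subst0 a)))
  | pbetaLeft : Judg (upg Γ) a (.tm A) →
      Judg (.tm .comp A :: upg Γ) l (.tm (C.substK (.inl (.var 0)) 1)) →
      Judg (.tm .comp B :: upg Γ) r (.tm (C.substK (.inr (.var 0)) 1)) →
      Judg Γ (.pbetaLeft C l r a)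
        (.pf (.eq (C.subst0 (.inl a)) (.cases C (.inl a) l r) (l.subst0 a)))
  | pbetaRight : Judg (upg Γ) b (.tm B) →
      Judg (.tm .comp A :: upg Γ) l (.tm (C.substK (.inl (.var 0)) 1)) →
      Judg (.tm .comp B :: upg Γ) r (.tm (C.substK (.inr (.var 0)) 1)) →
      Judg Γ (.pbetaRight C l r b)
        (.pf (.eq (C.subst0 (.inr b)) (.cases C (.inr b) l r) (r.subst0 b)))
  | pbetaZero : Judg (upg Γ) z (.tm (C.subst0 .zero)) →
      Judg (.tm .comp C :: .tm .comp .nat :: upg Γ) s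
        (.tm (C.substK (.app .succ (.var 1)) 2)) →
      Judg Γ (.pbetaZero C z s)
        (.pf (.eq (C.subst0 .zero) (.natrec C .zero z s) z))
  | pbetaSucc : Judg (upg Γ) e (.tm .nat) →
      Judg (upg Γ) z (.tm (C.subst0 .zero)) →
      Judg (.tm .comp C :: .tm .comp .nat :: upg Γ) s
        (.tm (C.substK (.app .succ (.var 1)) 2)) →
      Judg Γ (.pbetaSucc C e z s)
        (.pf (.eq (C.subst0 (.app .succ e)) (.natrec C (.app .succ e) z s)
          (s.subst2 e (.natrec C e z s))))
  | pbetaPair : Judg (upg Γ) a (.tm A) → Judg (upg Γ) b (.tm (B.subst0 a)) →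
      Judg (.tm .comp B :: .tm .comp A :: upg Γ) e
        (.tm (C.substK (.pair (.var 1) (.var 0)) 2)) →
      Judg Γ (.pbetaPair a b e)
        (.pf (.eq (C.subst0 (.pair a b)) (.letPair C (.pair a b) e) (e.subst2 a b)))
  | pbetaSet : Judg (upg Γ) a (.tm A) → Judg (upg Γ) p (.pf (φ.subst0 a)) →
      Judg (.pf φ :: .tm .comp A :: upg Γ) e
        (.tm (C.substK (.elem (.var 1) (.var 0)) 2)) →
      Judg Γ (.pbetaSet a p e)
        (.pf (.eq (C.subst0 (.elem a p)) (.letSet C (.elem a p) e) (e.subst2 a p)))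
  | pbetaRepr : Judg (upg Γ) a (.tm A) → Judg (upg Γ) b (.tm (B.subst0 a)) →
      Judg (.tm .comp B :: .tm .comp A :: upg Γ) e
        (.tm (C.substK (.repr (.var 1) (.var 0)) 2)) →
      Judg Γ (.pbetaRepr a b e)
        (.pf (.eq (C.subst0 (.repr a b)) (.letRepr C (.repr a b) e) (e.subst2 a b)))
  | petaTy : Judg (upg Γ) f (.tm (.pi A B)) →
      Judg Γ (.petaTy f) (.pf (.eq (.pi A B) (.lam A (.app f.wk0 (.var 0))) f))
  | pirPr : Judg Γ A .ty → Judg (.pf φ :: upg Γ) e (.tm A.wk0) →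
      Judg (upg Γ) p (.pf φ) → Judg (upg Γ) q (.pf φ) →
      Judg Γ (.pirPr e p q) (.pf (.eq A (e.subst0 p) (e.subst0 q)))
  | pirTy : Judg Γ B .ty → Judg (upg Γ) e (.tm (.inter A B.wk0)) →
      Judg (upg Γ) a (.tm A) → Judg (upg Γ) b (.tm A) →
      Judg Γ (.pirTy e a b) (.pf (.eq B (.appIr e a) (.appIr e b)))
  | petaIr : Judg (upg Γ) f (.tm (.inter A B)) → Judg (upg Γ) g (.tm (.inter A B)) →
      Judg (upg Γ) i (.tm A) →
      Judg (.tm .comp A :: Γ) p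
        (.pf (.eq B (.appIr f.wk0 (.var 0)) (.appIr g.wk0 (.var 0)))) →
      Judg Γ (.petaIr f g i p) (.pf (.eq (.inter A B) f g))
  | petaPr : Judg (upg Γ) f (.tm (.pre φ B)) → Judg (upg Γ) g (.tm (.pre φ B)) →
      Judg (upg Γ) i (.pf φ) →
      Judg (.pf φ :: Γ) p
        (.pf (.eq B (.appPr f.wk0 (.var 0)) (.appPr g.wk0 (.var 0)))) →
      Judg Γ (.petaPr f g i p) (.pf (.eq (.pre φ B) f g))

/-- `Γ ⊢ A ty`: `A` is a well-formed type in `Γ`. -/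
abbrev IsTy (Γ : Ctx) (A : Tm) : Prop := Judg Γ A .ty
/-- `Γ ⊢ φ pr`: `φ` is a well-formed proposition in `Γ`. -/
abbrev IsPr (Γ : Ctx) (φ : Tm) : Prop := Judg Γ φ .pr
/-- `Γ ⊢ a : A`: term typing. -/
abbrev HasTy (Γ : Ctx) (a A : Tm) : Prop := Judg Γ a (.tm A)
/-- `Γ ⊢ p : φ`: proof typing. -/
abbrev HasPf (Γ : Ctx) (p φ : Tm) : Prop := Judg Γ p (.pf φ)

/-- `Γ ok`: context well-formedness. -/
inductive IsCtx : Ctx → Prop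
  | nil : IsCtx []
  | cons_tm {Γ : Ctx} {k : HypKind} {A : Tm} : IsCtx Γ → IsTy Γ A → IsCtx (.tm k A :: Γ)
  | cons_pf {Γ : Ctx} {φ : Tm} : IsCtx Γ → IsPr Γ φ → IsCtx (.pf φ :: Γ)

/-- The upgrade relation `Γ ⊑ Δ`: `Δ` is obtained from `Γ` by replacing some ghost
hypotheses by computational hypotheses with the same type. -/
inductive Upgrades : Ctx → Ctx → Prop
  | nil : Upgrades [] []
  | cons {Γ Δ : Ctx} (H : Hyp) : Upgrades Γ Δ → Upgrades (H :: Γ) (H :: Δ)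
  | upgrade {Γ Δ : Ctx} {A : Tm} : Upgrades Γ Δ →
      Upgrades (.tm .ghost A :: Γ) (.tm .comp A :: Δ)

/-- `Γ ⊢' σ : Δ`: well-formed substitution from `Γ` to `Δ`. -/
def SubstWf (σ : ℕ → Tm) (Γ Δ : Ctx) : Prop :=
  (∀ n A, HasVar Γ n (.tm .comp A) → HasTy Δ (σ n) (A.subst σ)) ∧
  (∀ n φ, HasVar Γ n (.pf φ) → HasPf Δ (σ n) (φ.subst σ)) ∧
  (∀ n A, HasVar Γ n (.tm .ghost A) →
    (∃ m, σ n = .var m ∧ HasVar Δ m (.tm .ghost (A.subst σ))) ∨ HasTy Δ (σ n) (A.subst σ))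

/-- `Γ ⊢ σ : Δ`: strict well-formed substitution (ghost variables are only
replaced with ghost variables). -/
def SubstStrict (σ : ℕ → Tm) (Γ Δ : Ctx) : Prop :=
  (∀ n A, HasVar Γ n (.tm .comp A) → HasTy Δ (σ n) (A.subst σ)) ∧
  (∀ n φ, HasVar Γ n (.pf φ) → HasPf Δ (σ n) (φ.subst σ)) ∧
  (∀ n A, HasVar Γ n (.tm .ghost A) → ∃ m, σ n = .var m ∧ HasVar Δ m (.tm .ghost (A.subst σ)))

end Ert

namespace Ert

theorem Upgrades.rfl : ∀ Γ : Ctx, Upgrades Γ Γ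
  | [] => .nil
  | H :: Γ => .cons H (Upgrades.rfl Γ)

theorem upg_eq_of_upgrades {Γ Δ : Ctx} (h : Upgrades Γ Δ) : upg Γ = upg Δ := by
  induction h with
  | nil => rfl
  | cons H _ ih => cases H <;> simp [upg, ih]
  | upgrade _ ih => simp [upg, ih]

theorem upgrades_upg {Γ Δ : Ctx} (h : Upgrades Γ Δ) : Upgrades (upg Γ) (upg Δ) := by
  rw [upg_eq_of_upgrades h]; exact .rfl _

theorem hasvar_of_upgrades {Γ Δ : Ctx} {n H} (h : HasVar Γ n H) (hu : Upgrades Γ Δ) :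
    HasVar Δ n H ∨ ∃ A, H = .tm .ghost A ∧ HasVar Δ n (.tm .comp A) := by
  induction h generalizing Δ with
  | head =>
    cases hu with
    | cons H h => exact Or.inl .head
    | upgrade h => exact Or.inr ⟨_, rfl, .head⟩
  | tail h ih =>
    cases hu with
    | cons H' hu' =>
      rcases ih hu' with h' | ⟨A, rfl, h'⟩
      · exact Or.inl h'.tail
      · exact Or.inr ⟨_, rfl, h'.tail⟩
    | upgrade hu' =>
      rcases ih hu' with h' | ⟨A, rfl, h'⟩
      · exact Or.inl h'.tail
      · exact Or.inr ⟨_, rfl, h'.tail⟩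

theorem hasvar_comp_of_upgrades {Γ Δ : Ctx} {n A} (hu : Upgrades Γ Δ)
    (h : HasVar Γ n (.tm .comp A)) : HasVar Δ n (.tm .comp A) := by
  rcases hasvar_of_upgrades h hu with h' | ⟨A', hEq, _⟩
  · exact h'
  · cases hEq

theorem hasvar_pf_of_upgrades {Γ Δ : Ctx} {n φ} (hu : Upgrades Γ Δ)
    (h : HasVar Γ n (.pf φ)) : HasVar Δ n (.pf φ) := by
  rcases hasvar_of_upgrades h hu with h' | ⟨A', hEq, _⟩
  · exact h'
  · cases hEq

theorem judg_upgrade {Γ : Ctx} {e : Tm} {ann : Annot} (h : Judg Γ e ann) :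
    ∀ Δ, Upgrades Γ Δ → Judg Δ e ann := by
  induction h <;> intro Δ hu
  case var h => exact .var (hasvar_comp_of_upgrades hu h)
  case pvar h => exact .pvar (hasvar_pf_of_upgrades hu h)
  all_goals constructor <;> solve_by_elim [Upgrades.cons, upgrades_upg]

/-- Upgrade of a single hypothesis. -/
def Hyp.upg : Hyp → Hyp
  | .tm _ A => .tm .comp A
  | .pf φ => .pf φ

theorem upg_cons (H : Hyp) (Γ : Ctx) : upg (H :: Γ) = H.upg :: upg Γ := by
  cases H <;> rfl

theorem Hyp.upg_wk (H : Hyp) : H.wk.upg = H.upg.wk := by cases H <;> rfl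

theorem hasvar_upg {Γ : Ctx} {n H} (h : HasVar Γ n H) : HasVar (upg Γ) n H.upg := by
  induction h with
  | head => rw [upg_cons, Hyp.upg_wk]; exact .head
  | tail h ih => rw [upg_cons, Hyp.upg_wk]; exact ih.tail

theorem hasvar_upg_inv {Γ : Ctx} {n H} : HasVar (upg Γ) n H →
    (∃ k A, H = .tm .comp A ∧ HasVar Γ n (.tm k A)) ∨
    (∃ φ, H = .pf φ ∧ HasVar Γ n (.pf φ)) := by
  induction Γ generalizing n H with
  | nil => intro h; cases h
  | cons H' Γ ih =>
    rw [upg_cons]; intro h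
    cases h with
    | head =>
      cases H' with
      | tm k A => exact Or.inl ⟨k, A.wk0, rfl, .head⟩
      | pf φ => exact Or.inr ⟨φ.wk0, rfl, .head⟩
    | tail h =>
      rcases ih h with ⟨k, A, rfl, h'⟩ | ⟨φ, rfl, h'⟩
      · exact Or.inl ⟨k, A.wk0, rfl, h'.tail⟩
      · exact Or.inr ⟨φ.wk0, rfl, h'.tail⟩

theorem upgrades_full : ∀ Γ : Ctx, Upgrades Γ (upg Γ)
  | [] => .nil
  | .tm .comp A :: Γ => .cons _ (upgrades_full Γ)
  | .tm .ghost A :: Γ => .upgrade (upgrades_full Γ)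
  | .pf φ :: Γ => .cons _ (upgrades_full Γ)

/-- **Substitutions can be upgraded.** If `Γ ⊢ σ : Δ` is a strict well-formed
substitution, then `↑Γ ⊢ σ : ↑Δ`, i.e. `σ` is also a (strict) well-formed
substitution from the full upgrade of `Γ` to the full upgrade of `Δ`. -/
theorem substitution_upgrade (σ : ℕ → Tm) (Γ Δ : Ctx) :
    SubstStrict σ Γ Δ → SubstStrict σ (upg Γ) (upg Δ) := by
  rintro ⟨hc, hp, hg⟩
  refine ⟨?_, ?_, ?_⟩
  · intro n A h
    rcases hasvar_upg_inv h with ⟨k, A', hEq, h'⟩ | ⟨φ, hEq, _⟩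
    · injection hEq with _ hA
      subst hA
      cases k with
      | comp => exact judg_upgrade (hc n A h') _ (upgrades_full Δ)
      | ghost =>
        obtain ⟨m, hm, hv⟩ := hg n A h'
        rw [hm]
        exact .var (hasvar_upg hv)
    · cases hEq
  · intro n φ h
    rcases hasvar_upg_inv h with ⟨k, A', hEq, _⟩ | ⟨φ', hEq, h'⟩
    · cases hEq
    · injection hEq with hφ
      subst hφ
      exact judg_upgrade (hp n φ h') _ (upgrades_full Δ)
  · intro n A h
    rcases hasvar_upg_inv h with ⟨k, A', hEq, _⟩ | ⟨φ', hEq, _⟩ <;> cases hEq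

end Ert
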